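/- Let 𝓑 be the blocks of a q-Steiner system S(t,k,n;q) and let 𝓘 be the set of (t+1)-dimensional subspaces of E = F_q^n contained in no block. Then (E,𝓘) is a t-(n, t+1, λ; q) subspace design with λ = (q^{n−t} − q^{k−t})/(q−1), i.e. every t-dimensional subspace of E is contained in exactly (q^{n−t} − q^{k−t})/(q−1) members of 𝓘. -/

import Mathlib

/-!
The (t+1)-dimensional subspaces I ⊇ T correspond to the points of the projective space of E/T,
so there are (q^{n-t} - 1)/(q - 1) of them, and (q^{k-t} - 1)/(q - 1) of them lie in a
k-dimensional W ⊇ T. A block containing such an I contains T, hence is the unique block B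
through T; so the members of 𝓘 through T are the (t+1)-dimensional I ⊇ T with I ⊄ B, and
their number is the difference of the two counts.
-/

/-- 𝓑 is a q-Steiner system S(t,k,n;q) on E = K^n. -/
def IsSteinerSystem {K : Type*} [Field K] [Fintype K] {n : ℕ}
    (t k : ℕ) (𝓑 : Set (Submodule K (Fin n → K))) : Prop :=
  1 ≤ t ∧ t ≤ k ∧ k ≤ n ∧
  (∀ B ∈ 𝓑, Module.finrank K B = k) ∧
  (∀ T : Submodule K (Fin n → K), Module.finrank K T = t → ∃! B, B ∈ 𝓑 ∧ T ≤ B)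

open Module Submodule

theorem Nat.card_subtype_and_add_card_subtype_and_not {α : Type*} [Finite α] (p q : α → Prop) :
    Nat.card {a // p a ∧ q a} + Nat.card {a // p a ∧ ¬ q a} = Nat.card {a // p a} := by
  have := Set.ncard_inter_add_ncard_sdiff_eq_ncard {a | p a} {a | q a}
  simp only [← Nat.card_coe_set_eq] at this
  exact this

namespace Submodule

variable {K V : Type*} [DivisionRing K] [AddCommGroup V] [Module K V]

theorem card_finrank_eq_one_mul_add_one [Finite K] [Module.Finite K V] :
    Nat.card {L : Submodule K V // finrank K L = 1} * (Nat.card K - 1) + 1 =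
      Nat.card K ^ finrank K V := by
  have : Finite V := Module.finite_of_finite K
  rw [← Nat.card_congr (Projectivization.equivSubmodule K V), ← Projectivization.card',
    Module.natCard_eq_pow_finrank (K := K)]

def finrankEqOneLeEquiv (U : Submodule K V) :
    {L : Submodule K U // finrank K L = 1} ≃ {L : Submodule K V // L ≤ U ∧ finrank K L = 1} :=
  ((MapSubtype.orderIso U).toEquiv.subtypeEquiv fun L => by
    rw [← finrank_map_subtype_eq U L]; rfl).trans
    (Equiv.subtypeSubtypeEquivSubtypeInter (· ≤ U) (fun L => finrank K L = 1))

theorem card_finrank_eq_one_le_mul_add_one [Finite K] [FiniteDimensional K V]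
    (U : Submodule K V) :
    Nat.card {L : Submodule K V // L ≤ U ∧ finrank K L = 1} * (Nat.card K - 1) + 1 =
      Nat.card K ^ finrank K U := by
  rw [← Nat.card_congr U.finrankEqOneLeEquiv, card_finrank_eq_one_mul_add_one]

theorem finrank_map_mkQ_add_finrank [FiniteDimensional K V] {T I : Submodule K V} (h : T ≤ I) :
    finrank K (I.map T.mkQ) + finrank K T = finrank K I := by
  have := (T.mkQ.domRestrict I).finrank_range_add_finrank_ker
  rwa [LinearMap.range_domRestrict, LinearMap.ker_domRestrict, ker_mkQ,
    (comapSubtypeEquivOfLe h).finrank_eq] at this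

def coversLeEquiv [FiniteDimensional K V] {T W : Submodule K V} (hTW : T ≤ W) :
    {I : Submodule K V // (T ≤ I ∧ finrank K I = finrank K T + 1) ∧ I ≤ W} ≃
      {L : Submodule K (V ⧸ T) // L ≤ W.map T.mkQ ∧ finrank K L = 1} :=
  (Equiv.subtypeEquivRight fun _ => and_right_comm.trans and_assoc).trans <|
  (Equiv.subtypeSubtypeEquivSubtypeInter (T ≤ ·)
    (fun I => I ≤ W ∧ finrank K I = finrank K T + 1)).symm.trans
    ((comapMkQRelIso T).symm.toEquiv.subtypeEquiv fun I => by
      have := finrank_map_mkQ_add_finrank I.2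
      change _ ↔ I.1.map T.mkQ ≤ _ ∧ finrank K (I.1.map T.mkQ) = 1
      rw [map_le_iff_le_comap, comap_map_mkQ, sup_eq_right.2 hTW]
      refine and_congr Iff.rfl ?_
      omega)

theorem card_covers_le_mul_add_one [Finite K] [FiniteDimensional K V] {T W : Submodule K V}
    (hTW : T ≤ W) :
    Nat.card {I : Submodule K V // (T ≤ I ∧ finrank K I = finrank K T + 1) ∧ I ≤ W} *
        (Nat.card K - 1) + 1 = Nat.card K ^ (finrank K W - finrank K T) := by
  rw [Nat.card_congr (coversLeEquiv hTW), card_finrank_eq_one_le_mul_add_one]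
  have := finrank_map_mkQ_add_finrank hTW
  congr 1
  omega

theorem card_covers_not_le_mul [Finite K] [FiniteDimensional K V] {T W : Submodule K V}
    (hTW : T ≤ W) :
    (Nat.card {I : Submodule K V // (T ≤ I ∧ finrank K I = finrank K T + 1) ∧ ¬ I ≤ W} : ℤ) *
        (Nat.card K - 1) =
      (Nat.card K : ℤ) ^ (finrank K V - finrank K T) -
        (Nat.card K : ℤ) ^ (finrank K W - finrank K T) := by
  have : Finite V := Module.finite_of_finite K
  have hall := card_covers_le_mul_add_one (K := K) (le_top : T ≤ ⊤)
  have hW := card_covers_le_mul_add_one hTW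
  have hsplit := Nat.card_subtype_and_add_card_subtype_and_not
    (fun I : Submodule K V => T ≤ I ∧ finrank K I = finrank K T + 1) (· ≤ W)
  simp only [le_top, and_true, finrank_top] at hall
  rw [← hsplit] at hall
  have hK : 1 ≤ Nat.card K := Nat.card_pos
  have hall' := congrArg (Nat.cast : ℕ → ℤ) hall
  have hW' := congrArg (Nat.cast : ℕ → ℤ) hW
  simp only [Nat.cast_add, Nat.cast_mul, Nat.cast_pow, Nat.cast_sub hK, Nat.cast_one] at hall' hW'
  linear_combination hall' - hW'

end Submodule

theorem stmt13 {K : Type*} [Field K] [Fintype K] {q n t k : ℕ}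
    (hq : Fintype.card K = q)
    (𝓑 : Set (Submodule K (Fin n → K))) (h𝓑 : IsSteinerSystem t k 𝓑) :
    let 𝓘 : Set (Submodule K (Fin n → K)) :=
      {I | Module.finrank K I = t + 1 ∧ ¬ ∃ B ∈ 𝓑, I ≤ B}
    ∀ T : Submodule K (Fin n → K), Module.finrank K T = t →
      (Nat.card {I : Submodule K (Fin n → K) // I ∈ 𝓘 ∧ T ≤ I} : ℤ) * (q - 1) =
        (q : ℤ) ^ (n - t) - (q : ℤ) ^ (k - t) := by
  intro 𝓘 T hT
  obtain ⟨-, -, -, hdim, hunique⟩ := h𝓑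
  obtain ⟨B, ⟨hB, hTB⟩, hB_unique⟩ := hunique T hT
  have h𝓘 : ∀ I, I ∈ 𝓘 ∧ T ≤ I ↔ (T ≤ I ∧ finrank K I = finrank K T + 1) ∧ ¬ I ≤ B := by
    intro I
    refine ⟨fun ⟨⟨hI, hI𝓑⟩, hTI⟩ => ⟨⟨hTI, hT ▸ hI⟩, fun hIB => hI𝓑 ⟨B, hB, hIB⟩⟩, ?_⟩
    rintro ⟨⟨hTI, hI⟩, hIB⟩
    refine ⟨⟨hT ▸ hI, ?_⟩, hTI⟩
    rintro ⟨B', hB', hIB'⟩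
    exact hIB (hB_unique B' ⟨hB', hTI.trans hIB'⟩ ▸ hIB')
  rw [Nat.card_congr (Equiv.subtypeEquivRight h𝓘), ← hq, ← Nat.card_eq_fintype_card,
    card_covers_not_le_mul hTB, finrank_fin_fun, hdim B hB, hT]
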